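/- Let X̄ = X ∪ {∂} with X finite, and let G be a (∂)-separated set of self-mappings on X̄ with g(∂) = ∂ for all g ∈ G. For subsets S, S' ⊆ X̄, define G_{S→S'} = {g ∈ G : g⁻¹(X) = S and g(S) ⊆ S'}. If S ⊆ X and S is nonempty, then |G_{S→S'}| ≤ |S'|; and if ∂ ∈ S, then G_{S→S'} is empty. -/
import Mathlib


open scoped Classical

/-- A set `G` of self-mappings on `X̄ = X ∪ {∂}` (with `∂` encoded by `none`) is
`(∂)`-separated if any two of its elements agreeing at one common non-cemetery point
agree at all common non-cemetery points. -/
def CemeterySeparated {X : Type*} (G : Set (Option X → Option X)) : Prop :=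
  ∀ g₁ ∈ G, ∀ g₂ ∈ G,
    ∀ y : Option X, (g₁ y ≠ none ∧ g₂ y ≠ none) → g₁ y = g₂ y →
      ∀ y' : Option X, (g₁ y' ≠ none ∧ g₂ y' ≠ none) → g₁ y' = g₂ y'

/-- For a `(∂)`-separated set `G` of self-mappings on `X̄` fixing `∂`, and subsets
`S, S' ⊆ X̄`, the set `G_{S→S'} = {g ∈ G : g⁻¹(X) = S, g(S) ⊆ S'}` has cardinality at
most `|S'|` when `S` is a nonempty subset of `X`, and is empty when `∂ ∈ S`. -/
theorem card_restriction_set {X : Type*} [Fintype X]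
    (G : Set (Option X → Option X))
    (hsep : CemeterySeparated G)
    (hnone : ∀ g ∈ G, g none = none)
    (S S' : Set (Option X)) :
    ((none ∉ S ∧ S.Nonempty →
        ({g ∈ G | {o : Option X | g o ≠ none} = S ∧ ∀ o ∈ S, g o ∈ S'}).ncard ≤
          S'.ncard) ∧
      (none ∈ S →
        {g ∈ G | {o : Option X | g o ≠ none} = S ∧ ∀ o ∈ S, g o ∈ S'} = ∅)) := by
  constructor
  · rintro ⟨hnS, x₀, hx₀⟩
    apply Set.ncard_le_ncard_of_injOn (fun g => g x₀)
    · rintro g ⟨hgG, hdom, hmap⟩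
      exact hmap x₀ hx₀
    · rintro g₁ ⟨hg₁G, hd₁, _⟩ g₂ ⟨hg₂G, hd₂, _⟩ heq
      have h₁ : g₁ x₀ ≠ none := show x₀ ∈ {o | g₁ o ≠ none} from hd₁.symm ▸ hx₀
      have h₂ : g₂ x₀ ≠ none := show x₀ ∈ {o | g₂ o ≠ none} from hd₂.symm ▸ hx₀
      have key := hsep g₁ hg₁G g₂ hg₂G x₀ ⟨h₁, h₂⟩ heq
      funext y
      by_cases hy : y ∈ S
      · exact key y ⟨show y ∈ {o | g₁ o ≠ none} from hd₁.symm ▸ hy, show y ∈ {o | g₂ o ≠ none} from hd₂.symm ▸ hy⟩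
      · have e₁ : g₁ y = none := by
          by_contra h; exact hy (hd₁ ▸ Set.mem_setOf_eq ▸ h)
        have e₂ : g₂ y = none := by
          by_contra h; exact hy (hd₂ ▸ Set.mem_setOf_eq ▸ h)
        rw [e₁, e₂]
  · intro hS
    ext g
    simp only [Set.mem_setOf_eq, Set.mem_empty_iff_false, iff_false]
    rintro ⟨hgG, hdom, _⟩
    have : g none ≠ none := show none ∈ {o | g o ≠ none} from hdom.symm ▸ hS
    exact this (hnone g hgG)
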